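/- Let X be a finite set of positive integers, let k and Δ be nonnegative reals, let (X', X'') be a (k,Δ)-halver of X, and let m be a natural number with m ≥ k/2 + Δ. Then SUMS_{≤k}(X) ⊆ SUMS_{≤m}(X') + SUMS_{≤m}(X'') ⊆ SUMS(X). -/

import Mathlib

open Pointwise

/-- `SUM S` is the sum of the elements of the finite set `S`. -/
def SUM (S : Finset ℕ) : ℕ := S.sum id

/-- `SUMSle X m` is the set of all subset sums of `X` using at most `m` elements. -/
def SUMSle (X : Finset ℕ) (m : ℕ) : Set ℕ := {y | ∃ S ⊆ X, S.card ≤ m ∧ SUM S = y}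

/-- `SUMSleR X k` is the set of all subset sums of `X` using at most `k` elements,
for a real bound `k`. -/
def SUMSleR (X : Finset ℕ) (k : ℝ) : Set ℕ := {y | ∃ S ⊆ X, (S.card : ℝ) ≤ k ∧ SUM S = y}

/-- `SUMS X` is the set of all subset sums of `X`. -/
def SUMS (X : Finset ℕ) : Set ℕ := {y | ∃ S ⊆ X, SUM S = y}

/-- `(X', X'')` is a `(k, Δ)`-halver of `X`: a partition of `X` into two disjoint parts such
that for every `S ⊆ X` with `|S| ≤ k` there is `Shat ⊆ X` with `|Shat| ≤ k`,
`SUM Shat = SUM S`, and `|Shat ∩ X'|, |Shat ∩ X''| ≤ |Shat|/2 + Δ`. -/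
def IsHalver (X X' X'' : Finset ℕ) (k Δ : ℝ) : Prop :=
  X' ∪ X'' = X ∧ Disjoint X' X'' ∧
  ∀ S ⊆ X, (S.card : ℝ) ≤ k →
    ∃ Shat ⊆ X, (Shat.card : ℝ) ≤ k ∧ SUM Shat = SUM S ∧
      ((Shat ∩ X').card : ℝ) ≤ (Shat.card : ℝ) / 2 + Δ ∧
      ((Shat ∩ X'').card : ℝ) ≤ (Shat.card : ℝ) / 2 + Δ

theorem SUM_union {A B : Finset ℕ} (h : Disjoint A B) : SUM (A ∪ B) = SUM A + SUM B :=
  Finset.sum_union h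

theorem SUM_eq_SUM_inter_add_SUM_inter {T X' X'' : Finset ℕ} (hT : T ⊆ X' ∪ X'')
    (hdis : Disjoint X' X'') : SUM T = SUM (T ∩ X') + SUM (T ∩ X'') := by
  rw [← SUM_union (hdis.mono Finset.inter_subset_right Finset.inter_subset_right),
    ← Finset.inter_union_distrib_left, Finset.inter_eq_left.mpr hT]

theorem SUM_mem_SUMSle_add_SUMSle {T X' X'' : Finset ℕ} {m : ℕ} (hT : T ⊆ X' ∪ X'')
    (hdis : Disjoint X' X'') (h' : (T ∩ X').card ≤ m) (h'' : (T ∩ X'').card ≤ m) :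
    SUM T ∈ SUMSle X' m + SUMSle X'' m :=
  ⟨_, ⟨T ∩ X', Finset.inter_subset_right, h', rfl⟩,
    _, ⟨T ∩ X'', Finset.inter_subset_right, h'', rfl⟩,
    (SUM_eq_SUM_inter_add_SUM_inter hT hdis).symm⟩

theorem SUMSle_add_SUMSle_subset_SUMS_union {X' X'' : Finset ℕ} (hdis : Disjoint X' X'')
    (m : ℕ) : SUMSle X' m + SUMSle X'' m ⊆ SUMS (X' ∪ X'') := by
  rintro _ ⟨_, ⟨S, hS, -, rfl⟩, _, ⟨T, hT, -, rfl⟩, rfl⟩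
  exact ⟨S ∪ T, Finset.union_subset_union hS hT, SUM_union (hdis.mono hS hT)⟩

theorem SUMSleR_subset_SUMSle_add_SUMSle {X X' X'' : Finset ℕ} {k Δ : ℝ}
    (hhal : IsHalver X X' X'' k Δ) {m : ℕ} (hm : k / 2 + Δ ≤ (m : ℝ)) :
    SUMSleR X k ⊆ SUMSle X' m + SUMSle X'' m := by
  obtain ⟨hun, hdis, hbalance⟩ := hhal
  rintro _ ⟨S, hS, hSk, rfl⟩
  obtain ⟨T, hT, hTk, hTS, h', h''⟩ := hbalance S hS hSk
  have hpart : ∀ n : ℕ, (n : ℝ) ≤ T.card / 2 + Δ → n ≤ m := fun n hn => by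
    exact_mod_cast (show (n : ℝ) ≤ m by linarith)
  rw [← hTS]
  exact SUM_mem_SUMSle_add_SUMSle (hun ▸ hT) hdis (hpart _ h') (hpart _ h'')

theorem stmt_6 (X X' X'' : Finset ℕ) (k Δ : ℝ)
    (hhal : IsHalver X X' X'' k Δ)
    (m : ℕ) (hm : k / 2 + Δ ≤ (m : ℝ)) :
    SUMSleR X k ⊆ SUMSle X' m + SUMSle X'' m ∧
      SUMSle X' m + SUMSle X'' m ⊆ SUMS X :=
  ⟨SUMSleR_subset_SUMSle_add_SUMSle hhal hm,
    hhal.1 ▸ SUMSle_add_SUMSle_subset_SUMS_union hhal.2.1 m⟩
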